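/- Let N ≥ 1 be an integer, δ > 0, and let α, β be real numbers with α > N and 0 < β < N. Then there exists a constant C > 0, depending only on N, α, β, δ, such that for all x, y ∈ ℝ^N and all t > 0 with |y−x|² + t² ≥ δ², one has ∫_{ℝ^N} (t+|z|)^{−α} |y−z−x|^{−β} dz ≤ C ( (1+|y−x|)^{−β} t^{−(α−N)} + (1+|y−x|)^{−(α+β−N)} ). -/

import Mathlib

/-!
Put `w = y - x` and `ρ = (t + |w|) / 2`. On the ball `|z - w| ≤ ρ` we have `t + |z| ≥ ρ`, and off
it `|z - w| ≥ ρ`; so the integral is at most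
`ρ^(-α) ∫_{|u| ≤ ρ} |u|^(-β) du + ρ^(-β) ∫ (t + |z|)^(-α) dz`.
By scaling this equals `ρ^(-(α + β - N)) K + ρ^(-β) t^(N - α) J` with
`K = ∫_{|u| ≤ 1} |u|^(-β) du` and `J = ∫ (1 + |u|)^(-α) du`, finite because `β < N < α`.
Finally `|w|² + t² ≥ δ²` forces `t + |w| ≥ δ`, whence `ρ ≥ c (1 + |w|)` with
`c = δ / (2 (1 + δ))`.
-/

open MeasureTheory Metric Module Real Set Filter

section Estimates

variable {E : Type*} [NormedAddCommGroup E]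

lemma add_norm_rpow_mul_norm_sub_rpow_le {t α β ρ : ℝ} (ht : 0 ≤ t) (hα : 0 ≤ α) (hβ : 0 ≤ β)
    (hρ : 0 < ρ) {w : E} (h2ρ : 2 * ρ ≤ t + ‖w‖) (z : E) :
    (t + ‖z‖) ^ (-α) * ‖z - w‖ ^ (-β) ≤
      ρ ^ (-α) * (closedBall 0 ρ).indicator (fun u ↦ ‖u‖ ^ (-β)) (z - w) +
        ρ ^ (-β) * (t + ‖z‖) ^ (-α) := by
  by_cases hz : z - w ∈ closedBall 0 ρ
  · have hρz : ρ ≤ t + ‖z‖ := by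
      have := norm_sub_norm_le w z
      rw [mem_closedBall_zero_iff] at hz
      rw [norm_sub_rev] at this
      linarith
    rw [indicator_of_mem hz]
    calc (t + ‖z‖) ^ (-α) * ‖z - w‖ ^ (-β) ≤ ρ ^ (-α) * ‖z - w‖ ^ (-β) :=
          mul_le_mul_of_nonneg_right (rpow_le_rpow_of_nonpos hρ hρz (neg_nonpos.2 hα))
            (by positivity)
      _ ≤ _ := le_add_of_nonneg_right (by positivity)
  · have hρz : ρ ≤ ‖z - w‖ := by
      rw [mem_closedBall_zero_iff, not_le] at hz
      exact hz.le
    rw [indicator_of_notMem hz, mul_zero, zero_add, mul_comm]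
    exact mul_le_mul_of_nonneg_right (rpow_le_rpow_of_nonpos hρ hρz (neg_nonpos.2 hβ))
      (by positivity)

variable [NormedSpace ℝ E]

lemma add_norm_smul_rpow_neg {t : ℝ} (ht : 0 < t) (α : ℝ) (u : E) :
    (t + ‖t • u‖) ^ (-α) = t ^ (-α) * (1 + ‖u‖) ^ (-α) := by
  rw [norm_smul, norm_of_nonneg ht.le, ← mul_one_add, mul_rpow ht.le (by positivity)]

variable [FiniteDimensional ℝ E] [MeasurableSpace E] [BorelSpace E]
  (μ : Measure E) [μ.IsAddHaarMeasure]

lemma integrable_add_norm_rpow_neg {t α : ℝ} (ht : 0 < t) (hα : (finrank ℝ E : ℝ) < α) :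
    Integrable (fun z : E ↦ (t + ‖z‖) ^ (-α)) μ := by
  refine (integrable_comp_smul_iff μ (fun z : E ↦ (t + ‖z‖) ^ (-α)) ht.ne').1 ?_
  simp only [add_norm_smul_rpow_neg ht]
  exact (integrable_one_add_norm hα).const_mul _

lemma integral_add_norm_rpow_neg {t : ℝ} (ht : 0 < t) (α : ℝ) :
    ∫ z, (t + ‖z‖) ^ (-α) ∂μ = t ^ ((finrank ℝ E : ℝ) - α) * ∫ u, (1 + ‖u‖) ^ (-α) ∂μ := by
  have h := Measure.integral_comp_smul_of_nonneg μ (fun z : E ↦ (t + ‖z‖) ^ (-α)) t (hR := ht.le)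
  simp only [add_norm_smul_rpow_neg ht, integral_const_mul, smul_eq_mul] at h
  rw [sub_eq_add_neg, rpow_add ht, rpow_natCast, mul_assoc, h,
    mul_inv_cancel_left₀ (pow_ne_zero _ ht.ne')]

lemma integrableOn_closedBall_norm_rpow_neg (hd : 1 ≤ finrank ℝ E) {β : ℝ}
    (hβ : β < finrank ℝ E) (ρ : ℝ) :
    IntegrableOn (fun u : E ↦ ‖u‖ ^ (-β)) (closedBall 0 ρ) μ := by
  refine (locallyIntegrable_of_norm_le_rpow (C := 1) hd hβ (Eventually.of_forall fun u ↦ ?_)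
    (measurable_norm.pow_const _).aestronglyMeasurable).integrableOn_isCompact
      (isCompact_closedBall 0 ρ)
  rw [one_mul, norm_of_nonneg (by positivity)]

lemma setIntegral_closedBall_norm_rpow_neg {ρ : ℝ} (hρ : 0 < ρ) (β : ℝ) :
    ∫ u in closedBall (0 : E) ρ, ‖u‖ ^ (-β) ∂μ =
      ρ ^ ((finrank ℝ E : ℝ) - β) * ∫ u in closedBall (0 : E) 1, ‖u‖ ^ (-β) ∂μ := by
  have h := Measure.setIntegral_comp_smul μ (fun u : E ↦ ‖u‖ ^ (-β)) (closedBall 0 1) hρ.ne'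
  rw [_root_.smul_closedBall _ _ zero_le_one, smul_zero, norm_of_nonneg hρ.le, mul_one,
    abs_of_pos (by positivity)] at h
  simp only [norm_smul, norm_of_nonneg hρ.le, mul_rpow hρ.le (norm_nonneg _),
    integral_const_mul, smul_eq_mul] at h
  rw [sub_eq_add_neg, rpow_add hρ, rpow_natCast, mul_assoc, h,
    mul_inv_cancel_left₀ (pow_ne_zero _ hρ.ne')]

theorem integral_add_norm_rpow_mul_norm_sub_rpow_le (hd : 1 ≤ finrank ℝ E) {t α β ρ : ℝ}
    (ht : 0 < t) (hα : (finrank ℝ E : ℝ) < α) (hβ0 : 0 ≤ β) (hβ : β < finrank ℝ E) (hρ : 0 < ρ)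
    {w : E} (h2ρ : 2 * ρ ≤ t + ‖w‖) :
    ∫ z, (t + ‖z‖) ^ (-α) * ‖z - w‖ ^ (-β) ∂μ ≤
      ρ ^ (-(α + β - finrank ℝ E)) * ∫ u in closedBall (0 : E) 1, ‖u‖ ^ (-β) ∂μ +
        ρ ^ (-β) * t ^ ((finrank ℝ E : ℝ) - α) * ∫ u, (1 + ‖u‖) ^ (-α) ∂μ := by
  have hα0 : 0 ≤ α := (Nat.cast_nonneg _).trans hα.le
  have hball : Integrable
      (fun z ↦ (closedBall (0 : E) ρ).indicator (fun u ↦ ‖u‖ ^ (-β)) (z - w)) μ :=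
    ((integrableOn_closedBall_norm_rpow_neg μ hd hβ ρ).integrable_indicator
      measurableSet_closedBall).comp_sub_right w
  have hfar := integrable_add_norm_rpow_neg μ ht hα
  calc ∫ z, (t + ‖z‖) ^ (-α) * ‖z - w‖ ^ (-β) ∂μ
      ≤ ∫ z, (ρ ^ (-α) * (closedBall 0 ρ).indicator (fun u ↦ ‖u‖ ^ (-β)) (z - w) +
          ρ ^ (-β) * (t + ‖z‖) ^ (-α)) ∂μ :=
        integral_mono_of_nonneg (Eventually.of_forall fun z ↦ by positivity)
          ((hball.const_mul _).add (hfar.const_mul _))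
          (Eventually.of_forall
            (add_norm_rpow_mul_norm_sub_rpow_le ht.le hα0 hβ0 hρ h2ρ))
    _ = ρ ^ (-α) * ∫ u in closedBall 0 ρ, ‖u‖ ^ (-β) ∂μ +
          ρ ^ (-β) * ∫ z, (t + ‖z‖) ^ (-α) ∂μ := by
        rw [integral_add (hball.const_mul _) (hfar.const_mul _), integral_const_mul,
          integral_const_mul, integral_sub_right_eq_self
            (fun z ↦ (closedBall (0 : E) ρ).indicator (fun u ↦ ‖u‖ ^ (-β)) z) w,
          integral_indicator measurableSet_closedBall]
    _ = _ := by
        rw [setIntegral_closedBall_norm_rpow_neg μ hρ, integral_add_norm_rpow_neg μ ht,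
          show -(α + β - finrank ℝ E) = -α + (finrank ℝ E - β) by ring, rpow_add hρ]
        ring

end Estimates

lemma div_mul_one_add_le_add_div_two {δ t r : ℝ} (hδ : 0 < δ) (ht : 0 ≤ t) (hr : 0 ≤ r)
    (h : δ ^ 2 ≤ r ^ 2 + t ^ 2) : δ / (2 * (1 + δ)) * (1 + r) ≤ (t + r) / 2 := by
  have hδtr : δ ≤ t + r :=
    (pow_le_pow_iff_left₀ hδ.le (by positivity) two_ne_zero).1 (by nlinarith)
  rw [div_mul_eq_mul_div, div_le_div_iff₀ (by positivity) two_pos]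
  nlinarith

lemma rpow_neg_le_mul_rpow_neg {c a ρ s : ℝ} (hc : 0 < c) (ha : 0 < a) (hs : 0 ≤ s)
    (h : c * a ≤ ρ) : ρ ^ (-s) ≤ c ^ (-s) * a ^ (-s) := by
  rw [← mul_rpow hc.le ha.le]
  exact rpow_le_rpow_of_nonpos (by positivity) h (neg_nonpos.2 hs)

theorem stmt_8 (N : ℕ) (hN : 1 ≤ N) (δ α β : ℝ) (hδ : 0 < δ)
    (hα : (N : ℝ) < α) (hβ0 : 0 < β) (hβ : β < N) :
    ∃ C > 0, ∀ (x y : EuclideanSpace ℝ (Fin N)) (t : ℝ), 0 < t →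
      δ ^ 2 ≤ ‖y - x‖ ^ 2 + t ^ 2 →
      (∫ z : EuclideanSpace ℝ (Fin N), (t + ‖z‖) ^ (-α) * ‖y - z - x‖ ^ (-β)) ≤
        C * ((1 + ‖y - x‖) ^ (-β) * t ^ (-(α - N)) +
          (1 + ‖y - x‖) ^ (-(α + β - N))) := by
  have hd : finrank ℝ (EuclideanSpace ℝ (Fin N)) = N := finrank_euclideanSpace_fin
  set K := ∫ u in closedBall (0 : EuclideanSpace ℝ (Fin N)) 1, ‖u‖ ^ (-β)
  set J := ∫ u : EuclideanSpace ℝ (Fin N), (1 + ‖u‖) ^ (-α)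
  set c := δ / (2 * (1 + δ))
  have hK : 0 ≤ K := setIntegral_nonneg measurableSet_closedBall fun u _ ↦ by positivity
  have hJ : 0 ≤ J := integral_nonneg fun u ↦ by positivity
  have hc : 0 < c := by positivity
  refine ⟨c ^ (-β) * J + c ^ (-(α + β - N)) * K + 1, by positivity, fun x y t ht hδt ↦ ?_⟩
  set r := ‖y - x‖
  have hρ := div_mul_one_add_le_add_div_two hδ ht.le (norm_nonneg _) hδt
  have hest := integral_add_norm_rpow_mul_norm_sub_rpow_le volume (w := y - x) (by rwa [hd]) ht
    (by rwa [hd]) hβ0.le (by rwa [hd]) (by positivity : 0 < (t + r) / 2) (by linarith)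
  rw [hd] at hest
  have hA := rpow_neg_le_mul_rpow_neg hc (by positivity) hβ0.le hρ
  have hB := rpow_neg_le_mul_rpow_neg hc (by positivity) (by linarith : 0 ≤ α + β - N) hρ
  have hint : ∀ z, ‖y - z - x‖ = ‖z - (y - x)‖ := fun z ↦ by rw [sub_right_comm, norm_sub_rev]
  simp_rw [hint, neg_sub α]
  calc _ ≤ _ := hest
    _ ≤ (c ^ (-(α + β - N)) * (1 + r) ^ (-(α + β - N))) * K +
          (c ^ (-β) * (1 + r) ^ (-β)) * t ^ ((N : ℝ) - α) * J := by gcongr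
    _ = (c ^ (-β) * J) * ((1 + r) ^ (-β) * t ^ ((N : ℝ) - α)) +
          (c ^ (-(α + β - N)) * K) * (1 + r) ^ (-(α + β - N)) := by ring
    _ ≤ _ := by
      rw [mul_add]
      gcongr <;> linarith [mul_nonneg (rpow_nonneg hc.le (-β)) hJ,
        mul_nonneg (rpow_nonneg hc.le (-(α + β - N))) hK]
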